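/- arXiv:2405.07558 — 11 statements merged into one kernel-verified Lean document; each statement's English description precedes it below -/
import Mathlib

section
/- Let p be a prime and let A be an N×N matrix over the finite field F_p = ZMod p. Let C_A = {v ∈ F_p^N : A^k v = v for some k ≥ 1} be the set of periodic points of A (a linear subspace of F_p^N). Write the characteristic polynomial of A as P_A(λ) = λ^k · f_A(λ) with f_A(0) ≠ 0. Then the dimension of C_A equals the degree of f_A; equivalently, dim C_A = N − (the multiplicity of 0 as a root of the characteristic polynomial of A). -/
/-!
The powers of `A` lie in a finite monoid, so some power `e = A ^ m` with `m ≠ 0` is idempotent.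
The periodic points of `A` are exactly the image of `e`, and the kernel of `e` is the generalized
`0`-eigenspace of `A`, whose dimension is the multiplicity of `0` as a root of the characteristic
polynomial. Rank–nullity gives the dimension of the image.
-/

open Matrix Polynomial Function

theorem exists_isIdempotentElem_pow {M : Type*} [Monoid M] [Finite M] (a : M) :
    ∃ m ≠ 0, IsIdempotentElem (a ^ m) := by
  obtain ⟨i, j, hij, hpow⟩ := Finite.exists_ne_map_eq_of_infinite (a ^ · : ℕ → M)
  wlog hlt : i < j generalizing i j
  · exact this j i hij.symm hpow.symm (by omega)
  obtain ⟨d, rfl⟩ := Nat.exists_eq_add_of_lt hlt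
  have hshift : ∀ n t, a ^ (i + n + (d + 1) * t) = a ^ (i + n) := by
    intro n t
    induction t with
    | zero => simp
    | succ t ih =>
      rw [mul_add_one, ← add_assoc, pow_add, ih, ← pow_add,
        show i + n + (d + 1) = i + d + 1 + n by ring, pow_add, ← hpow, ← pow_add]
  refine ⟨(d + 1) * (i + 1), by positivity, ?_⟩
  have := hshift ((d + 1) * (i + 1) - i) (i + 1)
  rw [Nat.add_sub_of_le (by nlinarith)] at this
  rw [IsIdempotentElem, ← pow_add, this]

namespace Module.End

section Semiring

variable {R V : Type*} [Semiring R] [AddCommMonoid V] [Module R V] {f : Module.End R V} {m : ℕ}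

theorem periodicPts_eq_range_pow (hm : m ≠ 0) (hf : IsIdempotentElem (f ^ m)) :
    periodicPts f = LinearMap.range (f ^ m) := by
  ext x
  simp only [mem_periodicPts, SetLike.mem_coe, LinearMap.mem_range]
  constructor
  · rintro ⟨n, hn, hx⟩
    have hnm : (f ^ (n * m)) x = x := by rw [coe_pow]; exact hx.mul_const m
    refine ⟨(f ^ (n * m - m)) x, ?_⟩
    rw [← mul_apply, ← pow_add, Nat.add_sub_of_le (Nat.le_mul_of_pos_left m hn), hnm]
  · rintro ⟨y, rfl⟩
    refine ⟨m, Nat.pos_of_ne_zero hm, ?_⟩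
    rw [IsPeriodicPt, IsFixedPt, ← coe_pow, ← mul_apply, hf.eq]

end Semiring

section CommRing

variable {R V : Type*} [CommRing R] [AddCommGroup V] [Module R V] {f : Module.End R V} {m : ℕ}

theorem ker_pow_eq_maxGenEigenspace_zero (hm : m ≠ 0) (hf : IsIdempotentElem (f ^ m)) :
    LinearMap.ker (f ^ m) = f.maxGenEigenspace 0 := by
  ext x
  simp only [LinearMap.mem_ker, mem_maxGenEigenspace, zero_smul, sub_zero]
  refine ⟨fun hx ↦ ⟨m, hx⟩, ?_⟩
  rintro ⟨k, hk⟩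
  rcases eq_or_ne k 0 with rfl | hk0
  · simp_all
  -- `f ^ m = (f ^ m) ^ k` is a multiple of `f ^ k`
  rw [← hf.pow_eq hk0, ← pow_mul,
    ← Nat.sub_add_cancel (Nat.le_mul_of_pos_left k (Nat.pos_of_ne_zero hm)),
    pow_add, mul_apply, hk, map_zero]

end CommRing

theorem finrank_range_pow {K V : Type*} [Field K] [AddCommGroup V] [Module K V]
    [FiniteDimensional K V] {f : Module.End K V} {m : ℕ} (hm : m ≠ 0)
    (hf : IsIdempotentElem (f ^ m)) :
    Module.finrank K (LinearMap.range (f ^ m)) =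
      Module.finrank K V - f.charpoly.rootMultiplicity 0 := by
  have := LinearMap.finrank_range_add_finrank_ker (f ^ m)
  rw [ker_pow_eq_maxGenEigenspace_zero hm hf, LinearMap.finrank_maxGenEigenspace_zero_eq,
    ← rootMultiplicity_eq_natTrailingDegree'] at this
  omega

end Module.End

theorem Polynomial.rootMultiplicity_zero_X_pow_mul {R : Type*} [CommRing R] {f : R[X]}
    (hf : f.eval 0 ≠ 0) (k : ℕ) : (X ^ k * f).rootMultiplicity 0 = k := by
  have hf0 : f ≠ 0 := by rintro rfl; simp at hf
  rw [mul_comm, ← sub_zero X, ← C_0, rootMultiplicity_mul_X_sub_C_pow hf0,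
    rootMultiplicity_eq_zero hf, zero_add]

theorem Matrix.setOf_pow_mulVec_eq_self {n R : Type*} [Fintype n] [DecidableEq n]
    [CommSemiring R] (A : Matrix n n R) :
    {v | ∃ k ≥ 1, (A ^ k) *ᵥ v = v} = periodicPts (toLin' A) := by
  ext v
  simp [mem_periodicPts, IsPeriodicPt, IsFixedPt, ← Module.End.coe_pow, ← toLin'_pow,
    Nat.one_le_iff_ne_zero, Nat.pos_iff_ne_zero]

theorem periodic_points_dim_general (p : ℕ) [Fact p.Prime] (N : ℕ)
    (A : Matrix (Fin N) (Fin N) (ZMod p)) :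
    ∃ W : Submodule (ZMod p) (Fin N → ZMod p),
      (W : Set (Fin N → ZMod p)) = {v | ∃ k ≥ 1, (A ^ k) *ᵥ v = v} ∧
      Module.finrank (ZMod p) W = N - Polynomial.rootMultiplicity 0 A.charpoly ∧
      ∀ (k : ℕ) (f : Polynomial (ZMod p)), A.charpoly = X ^ k * f → f.eval 0 ≠ 0 →
        Module.finrank (ZMod p) W = f.natDegree := by
  obtain ⟨m, hm, hA⟩ := exists_isIdempotentElem_pow A
  have hidem : IsIdempotentElem (toLin' A ^ m) := by
    rw [← toLin'_pow]
    exact hA.map toLinAlgEquiv'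
  have hrank : Module.finrank (ZMod p) (LinearMap.range (toLin' A ^ m)) =
      N - A.charpoly.rootMultiplicity 0 := by
    simpa using Module.End.finrank_range_pow hm hidem
  refine ⟨LinearMap.range (toLin' A ^ m), ?_, hrank, fun k f hA0 hf ↦ ?_⟩
  · rw [A.setOf_pow_mulVec_eq_self, Module.End.periodicPts_eq_range_pow hm hidem]
  · have hf0 : f ≠ 0 := by rintro rfl; simp at hf
    have hdeg : f.natDegree + k = N := by
      simpa [hA0, hf0] using A.charpoly_natDegree_eq_dim
    rw [hrank, hA0, rootMultiplicity_zero_X_pow_mul hf]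
    omega

/-- For an N×N matrix `A` over `F_p`, the set of periodic points
`C_A = {v | A^k v = v for some k ≥ 1}` is a linear subspace whose dimension equals
`N - (multiplicity of 0 as a root of the characteristic polynomial)`; equivalently, whenever
`P_A(λ) = λ^k f(λ)` with `f(0) ≠ 0`, the dimension equals `deg f`. -/
theorem periodic_points_dim (p : ℕ) [Fact p.Prime] (N : ℕ) (hN : 0 < N)
    (A : Matrix (Fin N) (Fin N) (ZMod p)) :
    ∃ W : Submodule (ZMod p) (Fin N → ZMod p),
      (W : Set (Fin N → ZMod p)) = {v | ∃ k ≥ 1, (A ^ k) *ᵥ v = v} ∧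
      Module.finrank (ZMod p) W = N - Polynomial.rootMultiplicity 0 A.charpoly ∧
      ∀ (k : ℕ) (f : Polynomial (ZMod p)), A.charpoly = X ^ k * f → f.eval 0 ≠ 0 →
        Module.finrank (ZMod p) W = f.natDegree :=
  periodic_points_dim_general p N A
end

section
/- Let p be a prime and M an r×r matrix over F_p = ZMod p, and consider the dynamics w(t+1) = M w(t). Then every trajectory is eventually constant — i.e., for each initial condition w0 ∈ F_p^r there exist T ∈ ℕ and a vector α (depending on w0) with M^t w0 = α for all t ≥ T — if and only if the minimal polynomial of M divides λ^r(λ − 1). (The paper states this as: the minimal polynomial has the form λ^s(λ − 1) for some 0 ≤ s ≤ r − 1.) -/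
open Matrix Polynomial

/-- For the dynamics `w(t+1) = M w(t)` over `F_p`, every trajectory is eventually
constant if and only if the minimal polynomial of `M` divides `λ^r (λ - 1)`. -/
theorem eventually_constant_iff_minpoly (p : ℕ) [Fact p.Prime] (r : ℕ) (hr : 0 < r)
    (M : Matrix (Fin r) (Fin r) (ZMod p)) :
    (∀ w0 : Fin r → ZMod p, ∃ (T : ℕ) (α : Fin r → ZMod p), ∀ t ≥ T, (M ^ t) *ᵥ w0 = α) ↔
      minpoly (ZMod p) M ∣ X ^ r * (X - 1) := by
  have hint : IsIntegral (ZMod p) M :=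
    ⟨M.charpoly, M.charpoly_monic, M.aeval_self_charpoly⟩
  constructor
  · intro h
    choose T α hTα using h
    set T0 : ℕ := (Finset.univ : Finset (Fin r)).sup (fun j => T (Pi.single j 1)) with hT0
    have hstep : M ^ (T0 + 1) = M ^ T0 := by
      ext i j
      have hle : T (Pi.single j 1) ≤ T0 :=
        Finset.le_sup (f := fun j => T (Pi.single j 1)) (Finset.mem_univ j)
      have h1 := hTα (Pi.single j 1) T0 hle
      have h2 := hTα (Pi.single j 1) (T0 + 1) (le_trans hle (Nat.le_succ _))
      have h3 := congrFun (h2.trans h1.symm) i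
      simpa [Matrix.mulVec_single] using h3
    have haeval : aeval M ((X : (ZMod p)[X]) ^ T0 * (X - 1)) = 0 := by
      have : M ^ T0 * (M - 1) = 0 := by
        rw [mul_sub, mul_one, ← pow_succ, hstep, sub_self]
      simpa [_root_.map_mul, map_pow, map_sub] using this
    have hd : minpoly (ZMod p) M ∣ (X : (ZMod p)[X]) ^ T0 * (X - 1) :=
      minpoly.dvd _ _ haeval
    have hq0 : minpoly (ZMod p) M ≠ 0 := minpoly.ne_zero hint
    have hdegq : (minpoly (ZMod p) M).natDegree ≤ r := by
      have hdc : minpoly (ZMod p) M ∣ M.charpoly :=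
        minpoly.dvd _ _ M.aeval_self_charpoly
      have := Polynomial.natDegree_le_of_dvd hdc M.charpoly_monic.ne_zero
      simpa [Matrix.charpoly_natDegree_eq_dim] using this
    obtain ⟨q1, q2, hq1, hq2, hq⟩ := exists_dvd_and_dvd_of_dvd_mul hd
    obtain ⟨i, hi, hassoc⟩ := (dvd_prime_pow Polynomial.prime_X T0).mp hq1
    have hq1ne : q1 ≠ 0 := by
      intro h0
      rw [h0] at hassoc
      exact pow_ne_zero i Polynomial.X_ne_zero
        ((associated_zero_iff_eq_zero _).mp hassoc.symm)
    have hq2ne : q2 ≠ 0 := by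
      intro h0
      apply hq0
      rw [hq, h0, mul_zero]
    have hdeg1 : q1.natDegree = i := by
      have := Polynomial.natDegree_eq_of_degree_eq (degree_eq_degree_of_associated hassoc)
      simpa using this
    have hir : i ≤ r := by
      have : q1.natDegree ≤ (minpoly (ZMod p) M).natDegree := by
        rw [hq, Polynomial.natDegree_mul hq1ne hq2ne]
        exact Nat.le_add_right _ _
      omega
    have hq1r : q1 ∣ (X : (ZMod p)[X]) ^ r :=
      hassoc.dvd.trans (pow_dvd_pow _ hir)
    rw [hq]
    exact mul_dvd_mul hq1r hq2
  · intro hdvd w0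
    have h0 : aeval M ((X : (ZMod p)[X]) ^ r * (X - 1)) = 0 := by
      obtain ⟨c, hc⟩ := hdvd
      rw [hc, _root_.map_mul, minpoly.aeval, zero_mul]
    have hM : M ^ r * M = M ^ r := by
      have h1 : M ^ r * (M - 1) = 0 := by
        simpa [_root_.map_mul, map_pow, map_sub] using h0
      have h2 : M ^ r * M - M ^ r = 0 := by rwa [mul_sub, mul_one] at h1
      exact sub_eq_zero.mp h2
    refine ⟨r, M ^ r *ᵥ w0, fun t ht => ?_⟩
    obtain ⟨k, rfl⟩ := Nat.exists_eq_add_of_le ht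
    have hpow : M ^ (r + k) = M ^ r := by
      clear ht
      induction k with
      | zero => rfl
      | succ n ih => rw [← Nat.add_assoc, pow_succ, ih, hM]
    rw [hpow]
end

section
/- The linear network x(t+1) = A x(t) over F_p achieves synchronization if and only if C_A ⊆ S, where C_A is the set of periodic points of A and S is the synchronization set. -/
open Matrix

/-- The linear network `x(t+1) = A x(t)` over `F_p` (with `A` an n×n block matrix
of m×m blocks, states partitioned into n blocks of size m) achieves synchronization if and only
if `C_A ⊆ S`, where `C_A` is the set of periodic points of `A` and
`S = {1_n ⊗ α | α ∈ F_p^m}` is the synchronization set. -/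
theorem synchronization_iff_periodic_in_sync_set (p n m : ℕ) [Fact p.Prime]
    [NeZero n] [NeZero m] (A : Matrix (Fin n × Fin m) (Fin n × Fin m) (ZMod p)) :
    (∀ x0 : Fin n × Fin m → ZMod p, ∃ T : ℕ, ∀ t ≥ T,
        ∀ i j : Fin n, ∀ a : Fin m, ((A ^ t) *ᵥ x0) (i, a) = ((A ^ t) *ᵥ x0) (j, a)) ↔
      {v : Fin n × Fin m → ZMod p | ∃ k ≥ 1, (A ^ k) *ᵥ v = v} ⊆
        {v : Fin n × Fin m → ZMod p | ∃ α : Fin m → ZMod p, v = fun q => α q.2} := by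
  constructor
  · intro hsync v hv
    obtain ⟨k, hk, hkv⟩ := hv
    obtain ⟨T, hT⟩ := hsync v
    have hiter : ∀ N : ℕ, (A ^ (k * N)) *ᵥ v = v := by
      intro N
      induction N with
      | zero => simp
      | succ N ih =>
        have hpow : A ^ (k * (N + 1)) = A ^ k * A ^ (k * N) := by
          rw [← pow_add]; ring_nf
        rw [hpow, ← Matrix.mulVec_mulVec, ih, hkv]
    have ht : k * (T + 1) ≥ T := by nlinarith
    have h := hT (k * (T + 1)) ht
    rw [hiter (T + 1)] at h
    have i0 : Fin n := ⟨0, Nat.pos_of_ne_zero (NeZero.ne n)⟩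
    refine ⟨fun a => v (i0, a), ?_⟩
    funext q
    exact h q.1 i0 q.2
  · intro hsub x0
    have key : ∀ s t : ℕ, s < t → (A ^ s) *ᵥ x0 = (A ^ t) *ᵥ x0 →
        ∃ T : ℕ, ∀ u ≥ T, ∀ i j : Fin n, ∀ a : Fin m,
          ((A ^ u) *ᵥ x0) (i, a) = ((A ^ u) *ᵥ x0) (j, a) := by
      intro s t hlt heq
      refine ⟨s, fun u hu i j a => ?_⟩
      have hper : (A ^ (t - s)) *ᵥ ((A ^ u) *ᵥ x0) = (A ^ u) *ᵥ x0 := by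
        rw [Matrix.mulVec_mulVec, ← pow_add]
        have h1 : t - s + u = (u - s) + t := by omega
        rw [h1, pow_add, ← Matrix.mulVec_mulVec, ← heq, Matrix.mulVec_mulVec,
          ← pow_add, show u - s + s = u by omega]
      obtain ⟨α, hα⟩ := hsub ⟨t - s, by omega, hper⟩
      rw [hα]
    obtain ⟨s, t, hst, heq⟩ :=
      Finite.exists_ne_map_eq_of_infinite (fun t : ℕ => (A ^ t) *ᵥ x0)
    rcases hst.lt_or_gt with h | h
    · exact key s t h heq
    · exact key t s h heq.symm
end

section
/- The linear network x(t+1) = A x(t) over F_p achieves consensus if and only if C_A ⊆ S and C_A = {β ∈ F_p^{n·m} : A β = β}, where C_A is the set of periodic points of A and S is the synchronization set. -/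
open Matrix

private lemma fix_pow {N : Type*} [Fintype N] [DecidableEq N] {R : Type*} [CommRing R]
    (A : Matrix N N R) (v : N → R) (h : A *ᵥ v = v) : ∀ t, (A ^ t) *ᵥ v = v := by
  intro t
  induction t with
  | zero => simp
  | succ t ih =>
    rw [pow_succ, ← Matrix.mulVec_mulVec, h, ih]

/-- The linear network `x(t+1) = A x(t)` over `F_p` achieves consensus if and only
if `C_A ⊆ S` and `C_A = {β | A β = β}`, where `C_A` is the set of periodic points of `A` and
`S = {1_n ⊗ α | α ∈ F_p^m}` is the synchronization set. -/
theorem consensus_iff_periodic_fixed (p n m : ℕ) [Fact p.Prime]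
    [NeZero n] [NeZero m] (A : Matrix (Fin n × Fin m) (Fin n × Fin m) (ZMod p)) :
    (∀ x0 : Fin n × Fin m → ZMod p, ∃ (T : ℕ) (α : Fin m → ZMod p), ∀ t ≥ T,
        (A ^ t) *ᵥ x0 = fun q => α q.2) ↔
      ({v : Fin n × Fin m → ZMod p | ∃ k ≥ 1, (A ^ k) *ᵥ v = v} ⊆
          {v : Fin n × Fin m → ZMod p | ∃ α : Fin m → ZMod p, v = fun q => α q.2} ∧
        {v : Fin n × Fin m → ZMod p | ∃ k ≥ 1, (A ^ k) *ᵥ v = v} =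
          {β : Fin n × Fin m → ZMod p | A *ᵥ β = β}) := by
  constructor
  · intro h
    -- Key: any periodic v is both synchronized and fixed.
    have key : ∀ v : Fin n × Fin m → ZMod p, (∃ k ≥ 1, (A ^ k) *ᵥ v = v) →
        (∃ α : Fin m → ZMod p, v = fun q => α q.2) ∧ A *ᵥ v = v := by
      intro v ⟨k, hk1, hkv⟩
      obtain ⟨T, α, hT⟩ := h v
      have hper : ∀ N, (A ^ (k * N)) *ᵥ v = v := by
        intro N
        rw [pow_mul]
        exact fix_pow _ v hkv N
      have hle : T ≤ k * T := Nat.le_mul_of_pos_left T (by omega)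
      have hv : v = fun q => α q.2 := by
        rw [← hper T]; exact hT _ hle
      refine ⟨⟨α, hv⟩, ?_⟩
      have h1 : (A ^ (k * T + 1)) *ᵥ v = fun q => α q.2 := hT _ (by omega)
      calc A *ᵥ v = A *ᵥ ((A ^ (k * T)) *ᵥ v) := by rw [hper]
        _ = (A ^ (k * T + 1)) *ᵥ v := by
            rw [Matrix.mulVec_mulVec, ← pow_succ']
        _ = v := by rw [h1, ← hv]
    refine ⟨fun v hv => (key v hv).1, ?_⟩
    ext β
    constructor
    · intro hβ; exact (key β hβ).2
    · intro hβ; exact ⟨1, le_refl 1, by simpa using hβ⟩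
  · rintro ⟨hS, hFix⟩ x0
    obtain ⟨a, b, hne, hab⟩ :=
      Finite.exists_ne_map_eq_of_infinite (fun t : ℕ => (A ^ t) *ᵥ x0)
    -- wlog i < j
    obtain ⟨i, j, hij, hv⟩ : ∃ i j, i < j ∧ (A ^ i) *ᵥ x0 = (A ^ j) *ᵥ x0 := by
      rcases lt_or_gt_of_ne hne with h' | h'
      · exact ⟨a, b, h', hab⟩
      · exact ⟨b, a, h', hab.symm⟩
    set v := (A ^ i) *ᵥ x0 with hvdef
    have hper : (A ^ (j - i)) *ᵥ v = v := by
      rw [hvdef, Matrix.mulVec_mulVec, ← pow_add]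
      rw [Nat.sub_add_cancel hij.le]
      exact hv.symm
    have hvC : v ∈ {v : Fin n × Fin m → ZMod p | ∃ k ≥ 1, (A ^ k) *ᵥ v = v} :=
      ⟨j - i, by omega, hper⟩
    obtain ⟨α, hα⟩ := hS hvC
    have hfix : A *ᵥ v = v := by
      have := hFix ▸ hvC
      exact this
    refine ⟨i, α, fun t ht => ?_⟩
    have : (A ^ t) *ᵥ x0 = (A ^ (t - i)) *ᵥ v := by
      rw [hvdef, Matrix.mulVec_mulVec, ← pow_add, Nat.sub_add_cancel ht]
    rw [this, fix_pow A v hfix, hα]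
end

section
/- Suppose the synchronization set S is A-invariant, i.e., A · (1_n ⊗ I_m) = 1_n ⊗ A_1 (equivalently A_1 = A_2 = ⋯ = A_n). Then the linear network x(t+1) = A x(t) over F_p achieves synchronization if and only if the characteristic polynomial of A equals λ^{nm−m} · P_{A_1}(λ), where P_{A_1} is the characteristic polynomial of A_1. -/
/-!
The synchronization set `S = {1 ⊗ α}` is `A`-invariant and `A` acts on it as `A₁`
(through `α ↦ 1 ⊗ α`). In a basis adapted to `S` the matrix of `A` is block triangular,
with diagonal blocks `A₁` and the map `Ā` induced on `V ⧸ S`, so `P_A = P_{A₁} · P_Ā`.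
The network synchronizes iff every trajectory eventually enters `S`, i.e. iff `Ā` is
nilpotent, i.e. iff `P_Ā = λ ^ dim (V ⧸ S) = λ ^ (nm - m)`.
-/

open Matrix Polynomial Module

/-- The i-th block row sum `A_i = ∑_{j=1}^n A_{ij}` of an n×n block matrix with m×m blocks. -/
def blockRowSum {p n m : ℕ} (A : Matrix (Fin n × Fin m) (Fin n × Fin m) (ZMod p))
    (i : Fin n) : Matrix (Fin m) (Fin m) (ZMod p) :=
  Matrix.of fun a b => ∑ j : Fin n, A (i, a) (j, b)

section Invariant

variable {R V : Type*} [CommRing R] [AddCommGroup V] [Module R V]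
  {W : Submodule R V} {f : V →ₗ[R] V}

theorem LinearMap.exists_toMatrix_sumQuot_eq_fromBlocks {ι κ : Type*} [Fintype ι] [Fintype κ]
    [DecidableEq ι] [DecidableEq κ] (bW : Basis ι R W) (bQ : Basis κ R (V ⧸ W))
    (hf : W ≤ W.comap f) :
    ∃ B, toMatrix (bW.sumQuot bQ) (bW.sumQuot bQ) f =
      fromBlocks (toMatrix bW bW (f.restrict hf)) B 0 (toMatrix bQ bQ (W.mapQ W f hf)) := by
  refine ⟨Matrix.of fun i l ↦
    (bW.sumQuot bQ).repr (f (bW.sumQuot bQ (Sum.inr l))) (Sum.inl i), ?_⟩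
  ext (i | j) (k | l)
  · simp only [toMatrix_apply, Basis.sumQuot_inl, fromBlocks_apply₁₁]
    exact Basis.sumQuot_repr_inl_of_mem bW bQ _ (hf (bW k).2) i
  · simp [LinearMap.toMatrix_apply]
  · simpa [LinearMap.toMatrix_apply] using
      Basis.sumQuot_repr_inr_of_mem bW bQ _ (hf (bW k).2) j
  · simp only [toMatrix_apply, Basis.sumQuot_repr_inr, fromBlocks_apply₂₂]
    rw [← Basis.sumQuot_inr bW bQ l, W.mapQ_apply]
    rfl

theorem LinearMap.charpoly_eq_charpoly_restrict_mul_charpoly_mapQ [Free R V] [Module.Finite R V]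
    [Free R W] [Module.Finite R W] [Free R (V ⧸ W)] [Module.Finite R (V ⧸ W)]
    (hf : W ≤ W.comap f) :
    f.charpoly = (f.restrict hf).charpoly * (W.mapQ W f hf).charpoly := by
  classical
  let bW := Free.chooseBasis R W
  let bQ := Free.chooseBasis R (V ⧸ W)
  obtain ⟨B, hB⟩ := f.exists_toMatrix_sumQuot_eq_fromBlocks bW bQ hf
  rw [← f.charpoly_toMatrix (bW.sumQuot bQ), hB, charpoly_fromBlocks_zero₂₁,
    charpoly_toMatrix, charpoly_toMatrix]

theorem Submodule.exists_forall_pow_apply_mem_iff_exists_mapQ_pow_eq_zero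
    (hf : W ≤ W.comap f) (x : V) :
    (∃ T, ∀ t ≥ T, (f ^ t) x ∈ W) ↔ ∃ T, (W.mapQ W f hf ^ T) (W.mkQ x) = 0 := by
  have hmem (t : ℕ) : (f ^ t) x ∈ W ↔ (W.mapQ W f hf ^ t) (W.mkQ x) = 0 := by
    rw [← W.mapQ_pow hf, mkQ_apply, mapQ_apply, Quotient.mk_eq_zero]
  simp_rw [hmem]
  exact ⟨fun ⟨T, hT⟩ ↦ ⟨T, hT T le_rfl⟩,
    fun ⟨T, hT⟩ ↦ ⟨T, fun _ ht ↦ Module.End.pow_map_zero_of_le ht hT⟩⟩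

theorem LinearMap.range_le_comap_range_of_comp_eq {U : Type*} [AddCommGroup U] [Module R U]
    {g : U →ₗ[R] U} {e : U →ₗ[R] V} (h : f ∘ₗ e = e ∘ₗ g) :
    range e ≤ (range e).comap f := by
  rintro _ ⟨u, rfl⟩
  exact ⟨g u, (LinearMap.congr_fun h u).symm⟩

end Invariant

section Field

variable {K V : Type*} [Field K] [AddCommGroup V] [Module K V]
  {W : Submodule K V} {f : V →ₗ[K] V}

theorem Submodule.forall_exists_forall_pow_apply_mem_iff_charpoly_mapQ [FiniteDimensional K V]
    (hf : W ≤ W.comap f) :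
    (∀ x, ∃ T, ∀ t ≥ T, (f ^ t) x ∈ W) ↔
      (W.mapQ W f hf).charpoly = X ^ finrank K (V ⧸ W) := by
  rw [LinearMap.charpoly_eq_X_pow_iff, W.mkQ_surjective.forall]
  simp_rw [W.exists_forall_pow_apply_mem_iff_exists_mapQ_pow_eq_zero hf]

theorem LinearMap.charpoly_restrict_range_of_comp_eq {U : Type*} [AddCommGroup U] [Module K U]
    [FiniteDimensional K U] {g : U →ₗ[K] U} {e : U →ₗ[K] V} (he : Function.Injective e)
    (h : f ∘ₗ e = e ∘ₗ g) (hf : range e ≤ (range e).comap f) :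
    (f.restrict hf).charpoly = g.charpoly := by
  let φ := LinearEquiv.ofInjective e he
  have : f.restrict hf = φ.conj g := by
    ext u
    obtain ⟨u, rfl⟩ := φ.surjective u
    simpa [φ, LinearEquiv.conj_apply, Subtype.ext_iff] using LinearMap.congr_fun h u
  rw [this, LinearEquiv.charpoly_conj]

end Field

section Network

variable {K ι κ : Type*} [Field K]

theorem mem_range_funLeft_snd_iff [Nonempty ι] {x : ι × κ → K} :
    x ∈ (LinearMap.funLeft K K (Prod.snd : ι × κ → κ)).range ↔
      ∀ i j a, x (i, a) = x (j, a) := by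
  refine ⟨?_, fun h ↦ ?_⟩
  · rintro ⟨α, rfl⟩ i j a
    rfl
  · obtain ⟨i₀⟩ := ‹Nonempty ι›
    exact ⟨fun a ↦ x (i₀, a), funext fun ⟨i, a⟩ ↦ h i₀ i a⟩

variable [Fintype ι] [Fintype κ]

variable (K) in
theorem finrank_quotient_range_funLeft_snd [Nonempty ι] :
    finrank K ((ι × κ → K) ⧸ (LinearMap.funLeft K K (Prod.snd : ι × κ → κ)).range) =
      Fintype.card ι * Fintype.card κ - Fintype.card κ := by
  rw [Submodule.finrank_quotient, LinearMap.finrank_range_of_inj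
    (LinearMap.funLeft_injective_of_surjective K K _ Prod.snd_surjective),
    finrank_fintype_fun_eq_card, finrank_fintype_fun_eq_card, Fintype.card_prod]

variable [DecidableEq ι] [DecidableEq κ]

def Matrix.Synchronizes (A : Matrix (ι × κ) (ι × κ) K) : Prop :=
  ∀ x0, ∃ T, ∀ t ≥ T, ∀ i j a, ((A ^ t) *ᵥ x0) (i, a) = ((A ^ t) *ᵥ x0) (j, a)

-- `α ∘ Prod.snd` is the state `1 ⊗ α`, so `hA` says `A (1 ⊗ α) = 1 ⊗ A₁ α`.
theorem Matrix.synchronizes_iff_charpoly [Nonempty ι] {A : Matrix (ι × κ) (ι × κ) K}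
    {A₁ : Matrix κ κ K} (hA : ∀ α, A *ᵥ (α ∘ Prod.snd) = (A₁ *ᵥ α) ∘ Prod.snd) :
    A.Synchronizes ↔
      A.charpoly = X ^ (Fintype.card ι * Fintype.card κ - Fintype.card κ) * A₁.charpoly := by
  let e := LinearMap.funLeft K K (Prod.snd : ι × κ → κ)
  have he : Function.Injective e :=
    LinearMap.funLeft_injective_of_surjective K K _ Prod.snd_surjective
  have hcomm : A.toLin' ∘ₗ e = e ∘ₗ A₁.toLin' := LinearMap.ext hA
  have hS := LinearMap.range_le_comap_range_of_comp_eq hcomm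
  have hfac : A.charpoly = A₁.charpoly * ((LinearMap.range e).mapQ _ _ hS).charpoly := by
    rw [← charpoly_toLin' A, LinearMap.charpoly_eq_charpoly_restrict_mul_charpoly_mapQ hS,
      LinearMap.charpoly_restrict_range_of_comp_eq he hcomm, charpoly_toLin']
  rw [hfac, mul_comm (X ^ _), mul_right_inj' A₁.charpoly_monic.ne_zero,
    ← finrank_quotient_range_funLeft_snd K,
    ← Submodule.forall_exists_forall_pow_apply_mem_iff_charpoly_mapQ hS]
  simp only [e, mem_range_funLeft_snd_iff, ← toLin'_pow, toLin'_apply]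
  rfl

end Network

theorem mulVec_comp_snd_eq_blockRowSum {p n m : ℕ}
    (A : Matrix (Fin n × Fin m) (Fin n × Fin m) (ZMod p)) (α : Fin m → ZMod p) :
    A *ᵥ (α ∘ Prod.snd) = fun x ↦ (blockRowSum A x.1 *ᵥ α) x.2 := by
  ext ⟨i, a⟩
  simp only [mulVec, dotProduct, blockRowSum, Fintype.sum_prod_type, Function.comp_apply,
    of_apply, Finset.sum_mul]
  exact Finset.sum_comm

theorem synchronization_iff_charpoly_general (p n m : ℕ) [Fact p.Prime] [NeZero n]
    (A : Matrix (Fin n × Fin m) (Fin n × Fin m) (ZMod p))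
    (hS : ∀ i : Fin n, blockRowSum A i = blockRowSum A 0) :
    (∀ x0 : Fin n × Fin m → ZMod p, ∃ T : ℕ, ∀ t ≥ T,
        ∀ i j : Fin n, ∀ a : Fin m, ((A ^ t) *ᵥ x0) (i, a) = ((A ^ t) *ᵥ x0) (j, a)) ↔
      A.charpoly = X ^ (n * m - m) * (blockRowSum A 0).charpoly := by
  have hA (α : Fin m → ZMod p) :
      A *ᵥ (α ∘ Prod.snd) = (blockRowSum A 0 *ᵥ α) ∘ Prod.snd := by
    rw [mulVec_comp_snd_eq_blockRowSum]
    ext x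
    rw [hS]
    rfl
  have := Matrix.synchronizes_iff_charpoly hA
  rwa [Fintype.card_fin, Fintype.card_fin] at this

/-- Theorem 1: Suppose the synchronization set `S` is `A`-invariant, i.e.
`A_1 = A_2 = ⋯ = A_n`. Then the network `x(t+1) = A x(t)` over `F_p` achieves synchronization
if and only if `P_A(λ) = λ^{nm - m} · P_{A_1}(λ)`. -/
theorem synchronization_iff_charpoly (p n m : ℕ) [Fact p.Prime] [NeZero n] [NeZero m]
    (A : Matrix (Fin n × Fin m) (Fin n × Fin m) (ZMod p))
    (hS : ∀ i : Fin n, blockRowSum A i = blockRowSum A 0) :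
    (∀ x0 : Fin n × Fin m → ZMod p, ∃ T : ℕ, ∀ t ≥ T,
        ∀ i j : Fin n, ∀ a : Fin m, ((A ^ t) *ᵥ x0) (i, a) = ((A ^ t) *ᵥ x0) (j, a)) ↔
      A.charpoly = X ^ (n * m - m) * (blockRowSum A 0).charpoly :=
  synchronization_iff_charpoly_general p n m A hS
end

section
/- Let p be a prime and A an n×n matrix over F_p = ZMod p (the case m = 1), and suppose there exists a scalar a ∈ F_p such that A 1_n = a 1_n. Then the network x(t+1) = A x(t) achieves synchronization if and only if the characteristic polynomial of A equals λ^{n−1}(λ − a). -/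
/-! The line `D` spanned by `1_n` is `A`-invariant and `A` acts on it as multiplication by `a`,
so `charpoly A = (X - a) · charpoly Ā`, where `Ā` is the map induced on the
`(n - 1)`-dimensional quotient `F_p^n ⧸ D`. A state is synchronized exactly when it lies in `D`,
and `D` is invariant, so synchronization says that every vector of the quotient is killed by
some power of `Ā`, i.e. `charpoly Ā = X ^ (n - 1)`. -/

open Matrix Polynomial Module

theorem LinearMap.charpoly_eq_charpoly_restrict_mul_charpoly_mapQ_s7 {R V : Type*} [CommRing R]
    [AddCommGroup V] [Module R V] [Module.Finite R V] [Module.Free R V]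
    (W : Submodule R V) [Module.Free R W] [Module.Finite R W] [Module.Free R (V ⧸ W)]
    (e : V →ₗ[R] V) (he : W ≤ W.comap e) :
    e.charpoly = (e.restrict he).charpoly * (W.mapQ W e he).charpoly := by
  let bW := Free.chooseBasis R W
  let bQ := Free.chooseBasis R (V ⧸ W)
  let b := bW.sumQuot bQ
  let B : Matrix _ _ R := Matrix.of fun i l ↦ (b.repr (e (b (Sum.inr l)))) (Sum.inl i)
  suffices LinearMap.toMatrix b b e = Matrix.fromBlocks (LinearMap.toMatrix bW bW (e.restrict he))
      B 0 (LinearMap.toMatrix bQ bQ (W.mapQ W e he)) by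
    rw [← LinearMap.charpoly_toMatrix e b, this, Matrix.charpoly_fromBlocks_zero₂₁,
      LinearMap.charpoly_toMatrix, LinearMap.charpoly_toMatrix]
  ext (i | j) (k | l)
  · simp only [b, LinearMap.toMatrix_apply, Basis.sumQuot_inl, Matrix.fromBlocks_apply₁₁]
    apply Basis.sumQuot_repr_inl_of_mem
  · simp [b, LinearMap.toMatrix_apply, Matrix.fromBlocks_apply₁₂, B]
  · suffices W.mkQ (e (bW k)) = 0 by simp [LinearMap.toMatrix_apply, b, this]
    rw [← LinearMap.mem_ker, Submodule.ker_mkQ]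
    exact he (bW k).2
  · simp only [LinearMap.toMatrix_apply, Basis.sumQuot_repr_inr, Matrix.fromBlocks_apply₂₂, b]
    rw [← Basis.sumQuot_inr bW bQ l, W.mapQ_apply]
    simp

theorem LinearMap.charpoly_smul_one {R M : Type*} [CommRing R] [Nontrivial R] [AddCommGroup M]
    [Module R M] [Module.Finite R M] [Module.Free R M] (a : R) :
    (a • 1 : Module.End R M).charpoly = (X - C a) ^ finrank R M := by
  have h := LinearMap.charpoly_sub_smul (0 : Module.End R M) (-a)
  rwa [zero_sub, neg_smul, neg_neg, LinearMap.charpoly_zero, pow_comp, X_comp, C_neg,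
    ← sub_eq_add_neg] at h

theorem LinearMap.charpoly_restrict_span_singleton {K V : Type*} [Field K] [AddCommGroup V]
    [Module K V] {f : V →ₗ[K] V} {v : V} {a : K} (hv : v ≠ 0) (hfv : f v = a • v)
    (h : ∀ w ∈ K ∙ v, f w ∈ K ∙ v) :
    (f.restrict h).charpoly = X - C a := by
  have hrestrict : f.restrict h = a • 1 := by
    ext ⟨w, hw⟩
    obtain ⟨c, rfl⟩ := Submodule.mem_span_singleton.mp hw
    simp [hfv, smul_comm c a]
  rw [hrestrict, LinearMap.charpoly_smul_one, finrank_span_singleton hv, pow_one]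

theorem Submodule.exists_forall_ge_pow_apply_mem_iff {R M : Type*} [Semiring R] [AddCommMonoid M]
    [Module R M] {W : Submodule R M} {f : M →ₗ[R] M} (h : W ≤ W.comap f) (x : M) :
    (∃ T, ∀ t ≥ T, (f ^ t) x ∈ W) ↔ ∃ k, (f ^ k) x ∈ W := by
  refine ⟨fun ⟨T, hT⟩ ↦ ⟨T, hT T le_rfl⟩, fun ⟨k, hk⟩ ↦ ⟨k, fun t ht ↦ ?_⟩⟩
  obtain ⟨d, rfl⟩ := Nat.exists_eq_add_of_le ht
  rw [add_comm, pow_add, End.mul_apply]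
  exact W.le_comap_pow_of_le_comap h d hk

theorem Submodule.forall_exists_mapQ_pow_apply_eq_zero_iff {R M : Type*} [Ring R] [AddCommGroup M]
    [Module R M] {W : Submodule R M} {f : M →ₗ[R] M} (h : W ≤ W.comap f) :
    (∀ y : M ⧸ W, ∃ k, (W.mapQ W f h ^ k) y = 0) ↔ ∀ x : M, ∃ k, (f ^ k) x ∈ W := by
  refine W.mkQ_surjective.forall.trans (forall_congr' fun x ↦ exists_congr fun k ↦ ?_)
  rw [← W.mapQ_pow h, mkQ_apply, mapQ_apply, Submodule.Quotient.mk_eq_zero]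

theorem mem_span_one_iff_forall_eq {K ι : Type*} [Field K] (v : ι → K) :
    v ∈ K ∙ (1 : ι → K) ↔ ∀ i j, v i = v j := by
  refine ⟨fun hv i j ↦ ?_, fun hv ↦ ?_⟩
  · obtain ⟨c, rfl⟩ := Submodule.mem_span_singleton.mp hv
    simp
  · rcases isEmpty_or_nonempty ι with _ | ⟨⟨i₀⟩⟩
    · simp [Subsingleton.elim v 0]
    · exact Submodule.mem_span_singleton.mpr ⟨v i₀, funext fun j ↦ by simp [hv i₀ j]⟩

/-- Corollary 1: Let `A` be an n×n matrix over `F_p` (the case m = 1) with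
`A 1_n = a 1_n` for a scalar `a`. Then the network `x(t+1) = A x(t)` achieves synchronization
if and only if `P_A(λ) = λ^{n-1} (λ - a)`. -/
theorem synchronization_iff_charpoly_dim_one (p n : ℕ) [Fact p.Prime] [NeZero n]
    (A : Matrix (Fin n) (Fin n) (ZMod p)) (a : ZMod p)
    (ha : A *ᵥ (fun _ => 1) = fun _ => a) :
    (∀ x0 : Fin n → ZMod p, ∃ T : ℕ, ∀ t ≥ T,
        ∀ i j : Fin n, ((A ^ t) *ᵥ x0) i = ((A ^ t) *ᵥ x0) j) ↔
      A.charpoly = X ^ (n - 1) * (X - C a) := by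
  set W := ZMod p ∙ (1 : Fin n → ZMod p)
  have hone : (1 : Fin n → ZMod p) ≠ 0 := one_ne_zero
  have hA1 : toLin' A 1 = a • 1 := by
    rw [toLin'_apply]
    exact ha.trans (funext fun _ ↦ (mul_one a).symm)
  have hW : W ≤ W.comap (toLin' A) :=
    (Submodule.span_singleton_le_iff_mem _ _).mpr (Submodule.mem_span_singleton.mpr ⟨a, hA1.symm⟩)
  have hrank : finrank (ZMod p) ((Fin n → ZMod p) ⧸ W) = n - 1 := by
    rw [W.finrank_quotient, finrank_fin_fun, finrank_span_singleton hone]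
  rw [← charpoly_toLin', LinearMap.charpoly_eq_charpoly_restrict_mul_charpoly_mapQ_s7 W _ hW,
    LinearMap.charpoly_restrict_span_singleton hone hA1, mul_comm, ← hrank,
    mul_left_inj' (X_sub_C_ne_zero a), LinearMap.charpoly_eq_X_pow_iff,
    Submodule.forall_exists_mapQ_pow_apply_eq_zero_iff hW]
  refine forall_congr' fun x ↦ ?_
  simp_rw [← mem_span_one_iff_forall_eq, ← toLin'_apply, toLin'_pow]
  exact Submodule.exists_forall_ge_pow_apply_mem_iff hW x
end

section
/- Suppose the synchronization set S is A-invariant, i.e., A · (1_n ⊗ I_m) = 1_n ⊗ A_1 (equivalently A_1 = A_2 = ⋯ = A_n). Then the linear network x(t+1) = A x(t) over F_p achieves consensus if and only if the characteristic polynomial of A equals λ^{nm−m} · P_{A_1}(λ) and the minimal polynomial of A_1 divides λ^m(λ − 1). -/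
open Matrix Polynomial

namespace ConsensusAux

set_option linter.unusedSectionVars false

/-! ### Generic helper lemmas -/

lemma dvd_X_pow_mul_X_sub_one {K : Type*} [Field K] {g : K[X]} {T m : ℕ} (hmon : g.Monic)
    (hdvd : g ∣ X ^ T * (X - 1)) (hdeg : g.natDegree ≤ m) : g ∣ X ^ m * (X - 1) := by
  obtain ⟨d1, d2, hd1, hd2, rfl⟩ := exists_dvd_and_dvd_of_dvd_mul hdvd
  obtain ⟨i, hi, hassoc⟩ := (dvd_prime_pow (Polynomial.prime_X (R := K)) T).mp hd1
  have hg0 : d1 * d2 ≠ 0 := hmon.ne_zero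
  have hd10 : d1 ≠ 0 := fun h => hg0 (by simp [h])
  obtain ⟨u, hu⟩ := hassoc
  have hdeg1 : d1.natDegree = i := by
    have h1 : (d1 * (u : K[X])).natDegree = i := by rw [hu, Polynomial.natDegree_X_pow]
    rwa [Polynomial.natDegree_mul hd10 u.ne_zero,
      Polynomial.natDegree_eq_zero_of_isUnit u.isUnit, add_zero] at h1
  have him : i ≤ m := by
    have : d1.natDegree ≤ (d1 * d2).natDegree := Polynomial.natDegree_le_of_dvd ⟨d2, rfl⟩ hg0
    omega
  exact mul_dvd_mul (dvd_trans ⟨u, hu.symm⟩ (pow_dvd_pow X him)) hd2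

lemma matrix_ext_mulVec {R : Type*} [CommRing R] {ι : Type*} [Fintype ι] [DecidableEq ι]
    {M N : Matrix ι ι R} (h : ∀ v, M *ᵥ v = N *ᵥ v) : M = N := by
  ext i j
  have := congrFun (h (Pi.single j 1)) i
  simpa [Matrix.mulVec_single] using this

lemma charpoly_conj {R : Type*} [CommRing R] {ι : Type*} [Fintype ι] [DecidableEq ι]
    (P M Q : Matrix ι ι R) (hPQ : P * Q = 1) :
    (P * M * Q).charpoly = M.charpoly := by
  have hmap : ∀ X Y : Matrix ι ι R, (X * Y).map (Polynomial.C (R := R)) =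
      X.map Polynomial.C * Y.map Polynomial.C := fun X Y => by
    simpa using (RingHom.mapMatrix (Polynomial.C (R := R))).map_mul X Y
  have key : charmatrix (P * M * Q) =
      P.map Polynomial.C * charmatrix M * Q.map Polynomial.C := by
    rw [charmatrix]
    rw [charmatrix]
    rw [mul_sub, sub_mul]
    congr 1
    · calc Matrix.scalar ι (X : R[X])
          = Matrix.scalar ι (X : R[X]) * (P.map Polynomial.C * Q.map Polynomial.C) := by
            rw [← hmap, hPQ]; simp
        _ = P.map Polynomial.C * Matrix.scalar ι (X : R[X]) * Q.map Polynomial.C := by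
            rw [← mul_assoc,
              (Matrix.scalar_commute (X : R[X]) (fun r => Commute.all _ _)
                (P.map Polynomial.C)).eq]
    · simp only [RingHom.mapMatrix_apply]
      rw [hmap, hmap]
  rw [Matrix.charpoly, key, Matrix.det_mul, Matrix.det_mul, mul_comm (P.map Polynomial.C).det,
    mul_assoc, ← Matrix.det_mul, ← hmap, hPQ]
  simp [Matrix.charpoly]

lemma charpoly_of_nilpotent {ι : Type*} [Fintype ι] [DecidableEq ι] {K : Type*} [Field K]
    {M : Matrix ι ι K} (h : IsNilpotent M) : M.charpoly = X ^ (Fintype.card ι) := by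
  have := Matrix.isNilpotent_charpoly_sub_pow_of_isNilpotent h
  rw [← sub_eq_zero]
  exact this.eq_zero

lemma pow_stab {R : Type*} [CommRing R] {ι : Type*} [Fintype ι] [DecidableEq ι]
    {B : Matrix ι ι R} {m : ℕ} (h : B ^ (m + 1) = B ^ m) (k : ℕ) : B ^ (m + k) = B ^ m := by
  induction k with
  | zero => rfl
  | succ k ih => rw [← add_assoc, pow_succ, ih, ← pow_succ, h]

/-! ### The block decomposition -/

abbrev Sub (n : ℕ) [NeZero n] := {i : Fin n // i ≠ 0}

lemma sum_split {n : ℕ} [NeZero n] {β : Type*} [AddCommMonoid β] (f : Fin n → β) :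
    ∑ j, f j = f 0 + ∑ j : Sub n, f j.1 := by
  rw [← Finset.sum_subtype (Finset.univ.erase 0) (fun x => by simp) f]
  rw [← Finset.sum_erase_add Finset.univ f (Finset.mem_univ 0), add_comm]

variable {p n m : ℕ} [Fact p.Prime] [NeZero n] [NeZero m]

/-- The bottom-right block of the conjugated matrix: the "disagreement" dynamics. -/
def Cmat (A : Matrix (Fin n × Fin m) (Fin n × Fin m) (ZMod p)) :
    Matrix (Sub n × Fin m) (Sub n × Fin m) (ZMod p) :=
  Matrix.of fun w v => A (w.1.1, w.2) (v.1.1, v.2) - A (0, w.2) (v.1.1, v.2)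

lemma card_sub_prod : Fintype.card (Sub n × Fin m) = n * m - m := by
  have h1 : Fintype.card (Sub n) = n - 1 := by
    rw [Fintype.card_subtype_compl, Fintype.card_subtype_eq, Fintype.card_fin]
  rw [Fintype.card_prod, h1, Fintype.card_fin, Nat.sub_one_mul]

def eqv (n m : ℕ) [NeZero n] : (Fin n × Fin m) ≃ (Fin m ⊕ (Sub n × Fin m)) where
  toFun q := if h : q.1 = 0 then Sum.inl q.2 else Sum.inr (⟨q.1, h⟩, q.2)
  invFun s := Sum.elim (fun a => (0, a)) (fun w => (w.1.1, w.2)) s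
  left_inv := by rintro ⟨i, a⟩; by_cases h : i = 0 <;> simp [h]
  right_inv := by
    rintro (a | ⟨⟨i, hi⟩, a⟩)
    · simp
    · simp [hi]

def Lmat (n m : ℕ) [NeZero n] (p : ℕ) : Matrix (Sub n × Fin m) (Fin m) (ZMod p) :=
  Matrix.of fun w b => if w.2 = b then 1 else 0

lemma L_mul {ι : Type*} (X : Matrix (Fin m) ι (ZMod p)) :
    Lmat n m p * X = Matrix.of fun (w : Sub n × Fin m) b => X w.2 b := by
  ext w b
  simp [Lmat, Matrix.mul_apply, ite_mul]

lemma mul_L {ι : Type*} [Fintype ι] (X : Matrix ι (Sub n × Fin m) (ZMod p)) :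
    X * Lmat n m p = Matrix.of fun s b => ∑ j : Sub n, X s (j, b) := by
  ext s b
  simp [Lmat, Matrix.mul_apply, mul_ite, Fintype.sum_prod_type]

/-! ### Dynamics -/

def dvec {p n m : ℕ} [NeZero n] (x : Fin n × Fin m → ZMod p) : Sub n × Fin m → ZMod p :=
  fun w => x (w.1.1, w.2) - x (0, w.2)

def syncVec {p n m : ℕ} (α : Fin m → ZMod p) : Fin n × Fin m → ZMod p := fun q => α q.2

variable {A : Matrix (Fin n × Fin m) (Fin n × Fin m) (ZMod p)}
variable (hS : ∀ i : Fin n, blockRowSum A i = blockRowSum A 0)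

include hS

lemma mulVec_sync (α : Fin m → ZMod p) :
    A *ᵥ syncVec α = syncVec ((blockRowSum A 0) *ᵥ α) := by
  funext q
  obtain ⟨i, a⟩ := q
  show ∑ v : Fin n × Fin m, A (i, a) v * α v.2 = ∑ b, blockRowSum A 0 a b * α b
  rw [Fintype.sum_prod_type]
  rw [Finset.sum_comm]
  refine Finset.sum_congr rfl fun b _ => ?_
  have hb : blockRowSum A 0 a b = ∑ j : Fin n, A (i, a) (j, b) := by
    rw [← hS i]; rfl
  rw [hb, Finset.sum_mul]

lemma pow_mulVec_sync (t : ℕ) (α : Fin m → ZMod p) :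
    (A ^ t) *ᵥ syncVec α = syncVec (((blockRowSum A 0) ^ t) *ᵥ α) := by
  induction t with
  | zero => simp [syncVec]
  | succ t ih => rw [pow_succ', pow_succ', ← Matrix.mulVec_mulVec, ← Matrix.mulVec_mulVec,
      ih, mulVec_sync hS]

lemma dvec_mulVec (x : Fin n × Fin m → ZMod p) :
    dvec (A *ᵥ x) = Cmat A *ᵥ dvec x := by
  funext w
  obtain ⟨⟨i, hi⟩, a⟩ := w
  show (∑ v : Fin n × Fin m, A (i, a) v * x v) - (∑ v : Fin n × Fin m, A (0, a) v * x v)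
      = ∑ v : Sub n × Fin m, Cmat A (⟨i, hi⟩, a) v * dvec x v
  have hc : ∀ b : Fin m, ∑ j : Fin n, (A (i, a) (j, b) - A (0, a) (j, b)) = 0 := by
    intro b
    have h1 : blockRowSum A i a b = blockRowSum A 0 a b := by rw [hS i]
    simp only [blockRowSum, Matrix.of_apply] at h1
    rw [Finset.sum_sub_distrib, h1, sub_self]
  rw [← Finset.sum_sub_distrib]
  simp only [← sub_mul]
  rw [Fintype.sum_prod_type, Fintype.sum_prod_type]
  rw [Finset.sum_comm, Finset.sum_comm (s := @Finset.univ (Sub n) _)]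
  refine Finset.sum_congr rfl fun b _ => ?_
  rw [sum_split (fun j => (A (i, a) (j, b) - A (0, a) (j, b)) * x (j, b))]
  have h0 : ∑ j : Sub n, (A (i, a) (j.1, b) - A (0, a) (j.1, b))
      = -(A (i, a) (0, b) - A (0, a) (0, b)) := by
    have := sum_split (fun j => A (i, a) (j, b) - A (0, a) (j, b))
    rw [hc b] at this
    linear_combination -this
  calc (A (i, a) (0, b) - A (0, a) (0, b)) * x (0, b)
        + ∑ j : Sub n, (A (i, a) (j.1, b) - A (0, a) (j.1, b)) * x (j.1, b)
      = ∑ j : Sub n, (A (i, a) (j.1, b) - A (0, a) (j.1, b)) * (x (j.1, b) - x (0, b)) := by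
        rw [Finset.sum_congr rfl (fun j _ => mul_sub _ _ _), Finset.sum_sub_distrib,
          ← Finset.sum_mul, h0]
        ring
    _ = ∑ j : Sub n, Cmat A (⟨i, hi⟩, a) (j, b) * dvec x (j, b) := rfl

lemma dvec_pow_mulVec (t : ℕ) (x : Fin n × Fin m → ZMod p) :
    dvec ((A ^ t) *ᵥ x) = (Cmat A ^ t) *ᵥ dvec x := by
  induction t with
  | zero => simp [dvec]
  | succ t ih => rw [pow_succ', pow_succ', ← Matrix.mulVec_mulVec, ← Matrix.mulVec_mulVec,
      dvec_mulVec hS, ih]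

/-! ### Charpoly factorization -/

lemma charpoly_factor :
    A.charpoly = (blockRowSum A 0).charpoly * (Cmat A).charpoly := by
  classical
  have hS' : ∀ (i : Fin n) (a b : Fin m),
      ∑ j : Fin n, A (i, a) (j, b) = ∑ j : Fin n, A (0, a) (j, b) := by
    intro i a b
    have h1 := congrFun (congrFun (hS i) a) b
    simpa [blockRowSum] using h1
  set B := blockRowSum A 0 with hB
  set L := Lmat n m p with hL
  set A11 : Matrix (Fin m) (Fin m) (ZMod p) := Matrix.of fun a b => A (0, a) (0, b) with hA11
  set A12 : Matrix (Fin m) (Sub n × Fin m) (ZMod p) :=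
    Matrix.of fun a v => A (0, a) (v.1.1, v.2) with hA12
  set A21 : Matrix (Sub n × Fin m) (Fin m) (ZMod p) :=
    Matrix.of fun w b => A (w.1.1, w.2) (0, b) with hA21
  set A22 : Matrix (Sub n × Fin m) (Sub n × Fin m) (ZMod p) :=
    Matrix.of fun w v => A (w.1.1, w.2) (v.1.1, v.2) with hA22
  have hre : (Matrix.reindex (eqv n m) (eqv n m)) A = Matrix.fromBlocks A11 A12 A21 A22 := by
    ext s t
    rcases s with a | w <;> rcases t with b | v <;>
      simp [eqv, Matrix.reindex_apply, Matrix.submatrix_apply, hA11, hA12, hA21, hA22]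
  set P : Matrix (Fin m ⊕ (Sub n × Fin m)) (Fin m ⊕ (Sub n × Fin m)) (ZMod p) :=
    Matrix.fromBlocks 1 0 (-L) 1 with hP
  set Q : Matrix (Fin m ⊕ (Sub n × Fin m)) (Fin m ⊕ (Sub n × Fin m)) (ZMod p) :=
    Matrix.fromBlocks 1 0 L 1 with hQ
  have hPQ : P * Q = 1 := by
    rw [hP, hQ, Matrix.fromBlocks_multiply, ← Matrix.fromBlocks_one]
    congr 1 <;> simp
  have hblocks : P * (Matrix.reindex (eqv n m) (eqv n m)) A * Q
      = Matrix.fromBlocks B A12 0 (Cmat A) := by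
    rw [hre, hP, hQ, Matrix.fromBlocks_multiply, Matrix.fromBlocks_multiply]
    simp only [Matrix.one_mul, Matrix.mul_one, Matrix.zero_mul, Matrix.mul_zero, add_zero,
      zero_add, Matrix.neg_mul, mul_L, L_mul]
    ext s t
    rcases s with a | w <;> rcases t with b | v
    · simp only [hL, mul_L, L_mul, Matrix.fromBlocks_apply₁₁, Matrix.add_apply,
        Matrix.of_apply, hA11, hA12, hB, blockRowSum]
      rw [sum_split (fun j => A (0, a) (j, b))]
    · simp [Matrix.fromBlocks_apply₁₂]
    · obtain ⟨⟨i, hi⟩, a⟩ := w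
      have h1 := hS' i a b
      rw [sum_split (fun j => A (i, a) (j, b)), sum_split (fun j => A (0, a) (j, b))] at h1
      simp only [hL, mul_L, L_mul, Matrix.fromBlocks_apply₂₁, Matrix.add_apply, Matrix.neg_apply,
        Matrix.of_apply, Matrix.sub_apply, Matrix.zero_apply, hA11, hA12, hA21, hA22,
        Finset.sum_sub_distrib, Finset.sum_neg_distrib, Finset.sum_add_distrib]
      linear_combination h1
    · simp only [hL, mul_L, L_mul, Matrix.fromBlocks_apply₂₂, Matrix.add_apply, Matrix.neg_apply,
        Matrix.of_apply, hA12, hA22, Cmat]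
      ring
  calc A.charpoly = ((Matrix.reindex (eqv n m) (eqv n m)) A).charpoly :=
        (Matrix.charpoly_reindex _ _).symm
    _ = (P * (Matrix.reindex (eqv n m) (eqv n m)) A * Q).charpoly :=
        (charpoly_conj P _ Q hPQ).symm
    _ = (Matrix.fromBlocks B A12 0 (Cmat A)).charpoly := by rw [hblocks]
    _ = B.charpoly * (Cmat A).charpoly := Matrix.charpoly_fromBlocks_zero₂₁ _ _ _

end ConsensusAux

open ConsensusAux in
/-- Corollary 2: Suppose the synchronization set `S` is `A`-invariant, i.e.
`A_1 = A_2 = ⋯ = A_n`. Then the network `x(t+1) = A x(t)` over `F_p` achieves consensus if and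
only if `P_A(λ) = λ^{nm-m} · P_{A_1}(λ)` and the minimal polynomial of `A_1` divides
`λ^m (λ - 1)`. -/
theorem consensus_iff_charpoly_and_minpoly (p n m : ℕ) [Fact p.Prime] [NeZero n] [NeZero m]
    (A : Matrix (Fin n × Fin m) (Fin n × Fin m) (ZMod p))
    (hS : ∀ i : Fin n, blockRowSum A i = blockRowSum A 0) :
    (∀ x0 : Fin n × Fin m → ZMod p, ∃ (T : ℕ) (α : Fin m → ZMod p), ∀ t ≥ T,
        (A ^ t) *ᵥ x0 = fun q => α q.2) ↔
      (A.charpoly = X ^ (n * m - m) * (blockRowSum A 0).charpoly ∧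
        minpoly (ZMod p) (blockRowSum A 0) ∣ X ^ m * (X - 1)) := by
  classical
  constructor
  · intro H
    choose Tf αf hf using H
    set T := Finset.univ.sup Tf with hTdef
    have hT : ∀ x0, ∀ t ≥ T, (A ^ t) *ᵥ x0 = fun q => αf x0 q.2 := fun x0 t ht =>
      hf x0 t (le_trans (Finset.le_sup (Finset.mem_univ x0)) ht)
    -- stabilization of B
    have hBpow : ∀ α : Fin m → ZMod p,
        ((blockRowSum A 0) ^ (T + 1)) *ᵥ α = ((blockRowSum A 0) ^ T) *ᵥ α := by
      intro α
      have h1 := hT (syncVec α) T le_rfl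
      have h2 := hT (syncVec α) (T + 1) (Nat.le_succ T)
      rw [pow_mulVec_sync hS] at h1 h2
      funext b
      have e1 := congrFun h1 ((0 : Fin n), b)
      have e2 := congrFun h2 ((0 : Fin n), b)
      exact e2.trans e1.symm
    have hBmat : (blockRowSum A 0) ^ (T + 1) = (blockRowSum A 0) ^ T :=
      matrix_ext_mulVec hBpow
    have hmindvd : minpoly (ZMod p) (blockRowSum A 0) ∣ X ^ T * (X - 1) := by
      apply minpoly.dvd
      rw [_root_.map_mul, _root_.map_sub, aeval_X_pow, aeval_X, _root_.map_one, mul_sub, mul_one, ← pow_succ,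
        hBmat, sub_self]
    have hint : IsIntegral (ZMod p) (blockRowSum A 0) := Matrix.isIntegral _
    have hdeg : (minpoly (ZMod p) (blockRowSum A 0)).natDegree ≤ m := by
      have hdvd : minpoly (ZMod p) (blockRowSum A 0) ∣ (blockRowSum A 0).charpoly :=
        minpoly.dvd _ _ (Matrix.aeval_self_charpoly _)
      have h1 : (minpoly (ZMod p) (blockRowSum A 0)).natDegree
          ≤ ((blockRowSum A 0).charpoly).natDegree :=
        Polynomial.natDegree_le_of_dvd hdvd (Matrix.charpoly_monic _).ne_zero
      rwa [Matrix.charpoly_natDegree_eq_dim, Fintype.card_fin] at h1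
    have hmin := dvd_X_pow_mul_X_sub_one (minpoly.monic hint) hmindvd hdeg
    -- nilpotency of C
    have hCT : Cmat A ^ T = 0 := by
      apply matrix_ext_mulVec (N := 0)
      intro v
      set x0 : Fin n × Fin m → ZMod p :=
        fun q => if h : q.1 = 0 then 0 else v (⟨q.1, h⟩, q.2) with hx0
      have hd : dvec x0 = v := by
        funext w
        obtain ⟨⟨i, hi⟩, a⟩ := w
        simp [dvec, hx0, hi]
      have h2 := congrArg dvec (hT x0 T le_rfl)
      rw [dvec_pow_mulVec hS, hd] at h2
      rw [h2]
      funext w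
      simp [dvec]
    have hcC : (Cmat A).charpoly = X ^ (n * m - m) := by
      rw [charpoly_of_nilpotent ⟨T, hCT⟩, card_sub_prod]
    refine ⟨?_, hmin⟩
    rw [charpoly_factor hS, hcC, mul_comm]
  · rintro ⟨hchar, hmin⟩
    have hfac := charpoly_factor hS
    have hCc : (Cmat A).charpoly = X ^ (n * m - m) := by
      apply mul_left_cancel₀ (Matrix.charpoly_monic (blockRowSum A 0)).ne_zero
      rw [← hfac, hchar, mul_comm]
    have hCK : Cmat A ^ (n * m - m) = 0 := by
      have h0 := Matrix.aeval_self_charpoly (Cmat A)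
      rwa [hCc, map_pow, aeval_X] at h0
    have hBstep : (blockRowSum A 0) ^ (m + 1) = (blockRowSum A 0) ^ m := by
      obtain ⟨r, hr⟩ := hmin
      have h0 : Polynomial.aeval (blockRowSum A 0) ((X : (ZMod p)[X]) ^ m * (X - 1)) = 0 := by
        rw [hr, _root_.map_mul, minpoly.aeval, zero_mul]
      rwa [_root_.map_mul, _root_.map_sub, aeval_X_pow, aeval_X, _root_.map_one, mul_sub, mul_one, ← pow_succ,
        sub_eq_zero] at h0
    intro x0
    set K := n * m - m with hK
    have hdz : dvec ((A ^ K) *ᵥ x0) = 0 := by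
      rw [dvec_pow_mulVec hS, hCK]
      simp
    have hsync : (A ^ K) *ᵥ x0 = syncVec (fun b => ((A ^ K) *ᵥ x0) (0, b)) := by
      funext q
      obtain ⟨i, a⟩ := q
      by_cases h : i = 0
      · subst h; rfl
      · have h1 := congrFun hdz (⟨i, h⟩, a)
        simp only [dvec, Pi.zero_apply] at h1
        exact sub_eq_zero.mp h1
    refine ⟨K + m, ((blockRowSum A 0) ^ m) *ᵥ (fun b => ((A ^ K) *ᵥ x0) (0, b)), ?_⟩
    intro t ht
    have hsplit : A ^ t = A ^ (t - K) * A ^ K := by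
      rw [← pow_add]
      congr 1
      omega
    rw [hsplit, ← Matrix.mulVec_mulVec, hsync, pow_mulVec_sync hS]
    have hstab : (blockRowSum A 0) ^ (t - K) = (blockRowSum A 0) ^ m := by
      have h1 := pow_stab hBstep (t - K - m)
      rw [← h1]
      congr 1
      omega
    rw [hstab]
    rfl
end

section
/- The subspace W_1 = {α ∈ F_p^m : (A_i − A_1) A_1^t α = 0 for all i = 2,…,n and all t = 0,1,…,m−1} coincides with the set {α ∈ F_p^m : A_1^t α = A_2^t α = ⋯ = A_n^t α for all t = 1,2,…,m}. -/
open Matrix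

/-- Lemma: `W_1 = {α | (A_i - A_1) A_1^t α = 0, ∀ i = 2,…,n, ∀ t = 0,…,m-1}`
coincides with `{α | A_1^t α = A_2^t α = ⋯ = A_n^t α, ∀ t = 1,…,m}`. -/
theorem W1_characterization (p n m : ℕ) [Fact p.Prime] [NeZero n] [NeZero m]
    (A : Matrix (Fin n × Fin m) (Fin n × Fin m) (ZMod p)) :
    {α : Fin m → ZMod p | ∀ i : Fin n, i ≠ 0 → ∀ t < m,
        ((blockRowSum A i - blockRowSum A 0) * blockRowSum A 0 ^ t) *ᵥ α = 0} =
      {α : Fin m → ZMod p | ∀ t : ℕ, 1 ≤ t → t ≤ m → ∀ i : Fin n,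
        (blockRowSum A i ^ t) *ᵥ α = (blockRowSum A 0 ^ t) *ᵥ α} := by
  ext α
  simp only [Set.mem_setOf_eq]
  constructor
  · intro h t _ htm i
    by_cases hi : i = 0
    · subst hi; rfl
    · have key : ∀ s, s ≤ m →
          (blockRowSum A i ^ s) *ᵥ α = (blockRowSum A 0 ^ s) *ᵥ α := by
        intro s
        induction s with
        | zero => intro _; simp
        | succ k ih =>
          intro hk
          have hk' : k < m := hk
          have h1 := h i hi k hk'
          rw [sub_mul, sub_mulVec, sub_eq_zero] at h1
          rw [pow_succ', pow_succ', ← mulVec_mulVec, ← mulVec_mulVec,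
            ih (le_of_lt hk'), mulVec_mulVec, h1, mulVec_mulVec]
      exact key t htm
  · intro h i hi t htm
    rw [sub_mul, sub_mulVec, sub_eq_zero]
    cases t with
    | zero =>
      simpa [pow_one] using h 1 le_rfl (Nat.one_le_iff_ne_zero.mpr (NeZero.ne m)) i
    | succ k =>
      have h1 := h (k + 1) (Nat.succ_le_succ (Nat.zero_le k)) (le_of_lt htm) i
      have h2 := h (k + 2) (by omega) (by omega) i
      calc (blockRowSum A i * blockRowSum A 0 ^ (k + 1)) *ᵥ α
          = blockRowSum A i *ᵥ ((blockRowSum A 0 ^ (k + 1)) *ᵥ α) := by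
            rw [mulVec_mulVec]
        _ = blockRowSum A i *ᵥ ((blockRowSum A i ^ (k + 1)) *ᵥ α) := by rw [h1]
        _ = (blockRowSum A i ^ (k + 2)) *ᵥ α := by
            rw [mulVec_mulVec, ← pow_succ']
        _ = (blockRowSum A 0 ^ (k + 2)) *ᵥ α := h2
        _ = (blockRowSum A 0 * blockRowSum A 0 ^ (k + 1)) *ᵥ α := by
            rw [← pow_succ']
end

section
/- The subspace W = {1_n ⊗ α : α ∈ W_1} is A-invariant, i.e., A W ⊆ W; moreover, for every α ∈ W_1 one has A(1_n ⊗ α) = 1_n ⊗ (A_1 α). -/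
open Matrix

/-- Membership in `W_1 = {α | (A_i - A_1) A_1^t α = 0, ∀ i = 2,…,n, ∀ t = 0,…,m-1}`. -/
def memW1 {p n m : ℕ} (A : Matrix (Fin n × Fin m) (Fin n × Fin m) (ZMod p))
    [NeZero n] (α : Fin m → ZMod p) : Prop :=
  ∀ i : Fin n, i ≠ 0 → ∀ t < m,
    ((blockRowSum A i - blockRowSum A 0) * blockRowSum A 0 ^ t) *ᵥ α = 0

/-- Lemma: `W = {1_n ⊗ α | α ∈ W_1}` is `A`-invariant; moreover, for every
`α ∈ W_1`, `A (1_n ⊗ α) = 1_n ⊗ (A_1 α)`. -/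
theorem W_invariant (p n m : ℕ) [Fact p.Prime] [NeZero n] [NeZero m]
    (A : Matrix (Fin n × Fin m) (Fin n × Fin m) (ZMod p)) :
    (∀ α : Fin m → ZMod p, memW1 A α →
        A *ᵥ (fun q => α q.2) = fun q => (blockRowSum A 0 *ᵥ α) q.2) ∧
    (∀ x ∈ {x : Fin n × Fin m → ZMod p | ∃ α, memW1 A α ∧ x = fun q => α q.2},
        A *ᵥ x ∈ {x : Fin n × Fin m → ZMod p | ∃ α, memW1 A α ∧ x = fun q => α q.2}) := by
  have key : ∀ α : Fin m → ZMod p, memW1 A α →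
      A *ᵥ (fun q => α q.2) = fun q => (blockRowSum A 0 *ᵥ α) q.2 := by
    intro α hα
    funext q
    obtain ⟨i, a⟩ := q
    have hrow : blockRowSum A i *ᵥ α = blockRowSum A 0 *ᵥ α := by
      by_cases hi : i = 0
      · rw [hi]
      · have h := hα i hi 0 (Nat.pos_of_ne_zero (NeZero.ne m))
        rw [pow_zero, mul_one, sub_mulVec, sub_eq_zero] at h
        exact h
    calc (A *ᵥ fun q => α q.2) (i, a)
        = ∑ j : Fin n, ∑ b : Fin m, A (i, a) (j, b) * α b := by
          simp [mulVec, dotProduct, Fintype.sum_prod_type]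
      _ = (blockRowSum A i *ᵥ α) a := by
          simp only [mulVec, dotProduct, blockRowSum, Matrix.of_apply, Finset.sum_mul]
          rw [Finset.sum_comm]
      _ = (blockRowSum A 0 *ᵥ α) a := by rw [hrow]
  refine ⟨key, ?_⟩
  rintro x ⟨α, hα, rfl⟩
  refine ⟨blockRowSum A 0 *ᵥ α, ?_, key α hα⟩
  intro i hi t ht
  set M := blockRowSum A 0 with hM
  have hstep : ((blockRowSum A i - M) * M ^ t) *ᵥ (M *ᵥ α)
      = ((blockRowSum A i - M) * M ^ (t + 1)) *ᵥ α := by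
    rw [mulVec_mulVec, pow_succ, ← mul_assoc]
  rw [hstep]
  rcases Nat.lt_or_ge (t + 1) m with h1 | h1
  · exact hα i hi (t + 1) h1
  · have ht1 : t + 1 = m := le_antisymm (Nat.succ_le_of_lt ht) h1
    have hchar : M ^ m = ∑ s ∈ Finset.range m, (-(M.charpoly.coeff s)) • M ^ s := by
      have h0 := M.aeval_self_charpoly
      have hdeg : M.charpoly.natDegree = m := by
        rw [M.charpoly_natDegree_eq_dim, Fintype.card_fin]
      rw [Polynomial.aeval_eq_sum_range, hdeg, Finset.sum_range_succ] at h0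
      have hmonic : M.charpoly.coeff m = 1 := by
        have h2 := M.charpoly_monic
        rw [Polynomial.Monic, Polynomial.leadingCoeff, hdeg] at h2
        exact h2
      rw [hmonic, one_smul] at h0
      have h3 : M ^ m = -∑ s ∈ Finset.range m, M.charpoly.coeff s • M ^ s :=
        eq_neg_of_add_eq_zero_right h0
      rw [h3, ← Finset.sum_neg_distrib]
      simp [neg_smul]
    rw [ht1, hchar, Finset.mul_sum]
    have hsum : (∑ s ∈ Finset.range m,
          (blockRowSum A i - M) * (-M.charpoly.coeff s • M ^ s)) *ᵥ α
        = ∑ s ∈ Finset.range m,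
          ((blockRowSum A i - M) * (-M.charpoly.coeff s • M ^ s)) *ᵥ α :=
      map_sum (Matrix.mulVec.addMonoidHomLeft α) _ (Finset.range m)
    rw [hsum]
    refine Finset.sum_eq_zero fun s hs => ?_
    rw [mul_smul_comm, smul_mulVec,
      hα i hi s (Finset.mem_range.mp hs), smul_zero]
end

section
/- The linear network x(t+1) = A x(t) over F_p achieves synchronization if and only if every trajectory eventually enters W: for every initial state x0 ∈ F_p^{n·m} there exists T ∈ ℕ such that A^t x0 ∈ W for all t ≥ T. -/
open Matrix

lemma mulVec_const_block {p n m : ℕ} (A : Matrix (Fin n × Fin m) (Fin n × Fin m) (ZMod p))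
    (β : Fin m → ZMod p) (i : Fin n) (a : Fin m) :
    (A *ᵥ (fun q => β q.2)) (i, a) = (blockRowSum A i *ᵥ β) a := by
  simp only [Matrix.mulVec, dotProduct, blockRowSum, Matrix.of_apply,
    Fintype.sum_prod_type, Finset.sum_mul]
  rw [Finset.sum_comm]

/-- Lemma: The network `x(t+1) = A x(t)` over `F_p` achieves synchronization if
and only if every trajectory eventually enters `W = {1_n ⊗ α | α ∈ W_1}`. -/
theorem synchronization_iff_enters_W (p n m : ℕ) [Fact p.Prime] [NeZero n] [NeZero m]
    (A : Matrix (Fin n × Fin m) (Fin n × Fin m) (ZMod p)) :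
    (∀ x0 : Fin n × Fin m → ZMod p, ∃ T : ℕ, ∀ t ≥ T,
        ∀ i j : Fin n, ∀ a : Fin m, ((A ^ t) *ᵥ x0) (i, a) = ((A ^ t) *ᵥ x0) (j, a)) ↔
      (∀ x0 : Fin n × Fin m → ZMod p, ∃ T : ℕ, ∀ t ≥ T,
        ∃ α : Fin m → ZMod p, memW1 A α ∧ (A ^ t) *ᵥ x0 = fun q => α q.2) := by
  constructor
  · intro h x0
    obtain ⟨T, hT⟩ := h x0
    refine ⟨T, fun t ht => ?_⟩
    set α : Fin m → ZMod p := fun a => ((A ^ t) *ᵥ x0) (0, a) with hα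
    have key : ∀ s : ℕ, (A ^ (t + s)) *ᵥ x0 = fun q => ((blockRowSum A 0 ^ s) *ᵥ α) q.2 := by
      intro s
      induction s with
      | zero =>
        funext q
        have := hT t ht q.1 0 q.2
        simpa [hα, pow_zero, Matrix.one_mulVec] using this
      | succ s ih =>
        have h1 : (A ^ (t + (s + 1))) *ᵥ x0 = A *ᵥ ((A ^ (t + s)) *ᵥ x0) := by
          rw [Matrix.mulVec_mulVec, ← pow_succ', Nat.add_succ]
        funext q
        obtain ⟨i, a⟩ := q
        have hval : ∀ i' : Fin n, ((A ^ (t + (s + 1))) *ᵥ x0) (i', a)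
            = (blockRowSum A i' *ᵥ ((blockRowSum A 0 ^ s) *ᵥ α)) a := by
          intro i'
          rw [h1, ih, mulVec_const_block]
        have heq := hT (t + (s + 1)) (le_trans ht (Nat.le_add_right _ _)) i 0 a
        rw [heq, hval 0]
        simp [Matrix.mulVec_mulVec, ← pow_succ']
    have hsync : ∀ s : ℕ, ∀ i : Fin n,
        blockRowSum A i *ᵥ ((blockRowSum A 0 ^ s) *ᵥ α)
          = blockRowSum A 0 *ᵥ ((blockRowSum A 0 ^ s) *ᵥ α) := by
      intro s i
      funext a
      have h1 : (A ^ (t + (s + 1))) *ᵥ x0 = A *ᵥ ((A ^ (t + s)) *ᵥ x0) := by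
        rw [Matrix.mulVec_mulVec, ← pow_succ', Nat.add_succ]
      have hval : ∀ i' : Fin n, ((A ^ (t + (s + 1))) *ᵥ x0) (i', a)
          = (blockRowSum A i' *ᵥ ((blockRowSum A 0 ^ s) *ᵥ α)) a := by
        intro i'
        rw [h1, key s, mulVec_const_block]
      have heq := hT (t + (s + 1)) (le_trans ht (Nat.le_add_right _ _)) i 0 a
      rw [← hval i, ← hval 0, heq]
    refine ⟨α, ?_, ?_⟩
    · intro i _ s _
      rw [← Matrix.mulVec_mulVec, Matrix.sub_mulVec, hsync s i, sub_self]
    · have := key 0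
      simpa using this
  · intro h x0
    obtain ⟨T, hT⟩ := h x0
    refine ⟨T, fun t ht i j a => ?_⟩
    obtain ⟨α, -, heq⟩ := hT t ht
    rw [heq]
end

section
/- If α ∈ F_p^m is such that A^i(1_n ⊗ α) lies in the synchronization set S for every i ∈ ℕ, then A_1^i α = A_2^i α = ⋯ = A_n^i α for every i ≥ 1; in particular α ∈ W_1 and 1_n ⊗ α ∈ W. -/
open Matrix

/-- If `α ∈ F_p^m` is such that `A^i (1_n ⊗ α)` lies in the synchronization set
`S` for every `i ∈ ℕ`, then `A_1^i α = A_2^i α = ⋯ = A_n^i α` for every `i ≥ 1`; in particular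
`α ∈ W_1` and `1_n ⊗ α ∈ W`. -/
theorem mem_W1_of_orbit_in_sync_set (p n m : ℕ) [Fact p.Prime] [NeZero n] [NeZero m]
    (A : Matrix (Fin n × Fin m) (Fin n × Fin m) (ZMod p)) (α : Fin m → ZMod p)
    (hα : ∀ i : ℕ, ∃ β : Fin m → ZMod p,
      (A ^ i) *ᵥ (fun q => α q.2) = fun q => β q.2) :
    (∀ i : ℕ, 1 ≤ i → ∀ j : Fin n,
        (blockRowSum A j ^ i) *ᵥ α = (blockRowSum A 0 ^ i) *ᵥ α) ∧
    (∀ i : Fin n, i ≠ 0 → ∀ t < m,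
        ((blockRowSum A i - blockRowSum A 0) * blockRowSum A 0 ^ t) *ᵥ α = 0) ∧
    (∃ α' : Fin m → ZMod p,
        (∀ i : Fin n, i ≠ 0 → ∀ t < m,
          ((blockRowSum A i - blockRowSum A 0) * blockRowSum A 0 ^ t) *ᵥ α' = 0) ∧
        (fun (q : Fin n × Fin m) => α q.2) = fun q => α' q.2) := by
  choose β hβ using hα
  have hβ0 : β 0 = α := by
    funext b
    have h := congrFun (hβ 0) (0, b)
    simpa [Matrix.one_mulVec] using h.symm
  have hblock : ∀ (γ : Fin m → ZMod p) (q : Fin n × Fin m),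
      (A *ᵥ fun q => γ q.2) q = (blockRowSum A q.1 *ᵥ γ) q.2 := by
    intro γ q
    simp only [Matrix.mulVec, dotProduct, blockRowSum, Matrix.of_apply,
      Fintype.sum_prod_type, Finset.sum_mul]
    rw [Finset.sum_comm]
  have hstep : ∀ (i : ℕ) (j : Fin n), blockRowSum A j *ᵥ β i = β (i + 1) := by
    intro i j
    funext b
    have h1 := congrFun (hβ (i + 1)) (j, b)
    rw [pow_succ', ← Matrix.mulVec_mulVec, hβ i] at h1
    have h2 := hblock (β i) (j, b)
    simp only [h2] at h1
    exact h1
  have hpow : ∀ (i : ℕ) (j : Fin n), (blockRowSum A j ^ i) *ᵥ α = β i := by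
    intro i
    induction i with
    | zero => intro j; simp [Matrix.one_mulVec, hβ0]
    | succ k ih =>
      intro j
      rw [pow_succ', ← Matrix.mulVec_mulVec, ih j, hstep k j]
  have key : ∀ (i : Fin n) (t : ℕ),
      ((blockRowSum A i - blockRowSum A 0) * blockRowSum A 0 ^ t) *ᵥ α = 0 := by
    intro i t
    rw [← Matrix.mulVec_mulVec, hpow t 0, Matrix.sub_mulVec, hstep t i, hstep t 0, sub_self]
  refine ⟨fun i _ j => by rw [hpow i j, hpow i 0],
    fun i _ t _ => key i t,
    ⟨α, fun i _ t _ => key i t, rfl⟩⟩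
end
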